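/- arXiv:2204.07798 — 4 statements merged into one kernel-verified Lean document; each statement's English description precedes it below -/
import Mathlib

section
/- Let G and H be finite simple graphs with the same Laplacian permanental polynomial, i.e., per(xI − L(G)) = per(xI − L(H)) as polynomials in x. Then: (i) G and H have the same number of vertices; (ii) G and H have the same number of edges; (iii) the sum of the squares of the vertex degrees of G equals that of H; and (iv) Σ_i d_i(G)³ − 6c₃(G) = Σ_i d_i(H)³ − 6c₃(H), where d_i denotes the degree of the i-th vertex and c₃ denotes the number of triangles in the graph. -/
open scoped Classical
open Polynomial

noncomputable section

/-- The Laplacian permanental polynomial `per(x·I − L(G))` of a graph `G`,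
where `L(G) = D(G) − A(G)` is the Laplacian matrix. -/
def lapPermPoly {V : Type*} [Fintype V] (G : SimpleGraph V) : Polynomial ℚ :=
  Matrix.permanent
    (Matrix.diagonal (fun _ : V => (X : Polynomial ℚ)) - (G.lapMatrix ℚ).map Polynomial.C)

/-- The number of triangles (3-cycles) of `G`, i.e. the number of 3-cliques. -/
def triangleCount {V : Type*} [Fintype V] (G : SimpleGraph V) : ℕ :=
  (G.cliqueFinset 3).card

/-
Reversing `per(xI − L)` gives `per(I − xL)`. In its permutation expansion, σ contributes
`x^|supp σ| · ∏_{i ∉ supp σ} (1 − dᵢ x)` times the product of the adjacency indicators `[σ i ~ i]`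
over its support, so only permutations moving at most `k` vertices reach the coefficient of `xᵏ`.
When `|supp σ| ≤ 3` that product is the indicator that `supp σ` is a clique, and every 2-set
(3-set) is the support of exactly one (two) permutations, its derangements. Hence the coefficients
of `x`, `x²`, `x³` are `−Σ dᵢ`, `e₂(d) + |E|` and `−e₃(d) − Σ_{uv ∈ E} Σ_{i ≠ u,v} dᵢ + 2c₃`, which
determine `Σ dᵢ`, `Σ dᵢ²` and `Σ dᵢ³ − 6c₃` in turn; the number of vertices is the degree.
-/

open Finset

namespace Polynomial

variable {R ι : Type*} [CommRing R]

lemma reflect_sum (N : ℕ) (s : Finset ι) (f : ι → R[X]) :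
    reflect N (∑ i ∈ s, f i) = ∑ i ∈ s, reflect N (f i) := by
  ext k
  simp only [coeff_reflect, finsetSum_coeff]

lemma reflect_prod (s : Finset ι) (f : ι → R[X]) (N : ι → ℕ)
    (hf : ∀ i ∈ s, (f i).natDegree ≤ N i) :
    reflect (∑ i ∈ s, N i) (∏ i ∈ s, f i) = ∏ i ∈ s, reflect (N i) (f i) := by
  induction s using Finset.induction_on with
  | empty => simp [reflect_one]
  | insert a s ha ih =>
    have hs : (∏ i ∈ s, f i).natDegree ≤ ∑ i ∈ s, N i :=
      (natDegree_prod_le _ _).trans (sum_le_sum fun i hi => hf i (mem_insert_of_mem hi))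
    rw [sum_insert ha, prod_insert ha, prod_insert ha,
      reflect_mul _ _ (hf a (mem_insert_self a s)) hs,
      ih fun i hi => hf i (mem_insert_of_mem hi)]

variable (d : ι → R)

lemma coeff_succ_prod_insert_one_sub_C_mul_X {a : ι} {s : Finset ι} (ha : a ∉ s) (k : ℕ) :
    (∏ i ∈ insert a s, (1 - C (d i) * X)).coeff (k + 1) =
      (∏ i ∈ s, (1 - C (d i) * X)).coeff (k + 1) - d a * (∏ i ∈ s, (1 - C (d i) * X)).coeff k := by
  rw [prod_insert ha, sub_mul, one_mul, coeff_sub, mul_assoc, coeff_C_mul, coeff_X_mul]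

lemma coeff_zero_prod_one_sub_C_mul_X (s : Finset ι) :
    (∏ i ∈ s, (1 - C (d i) * X)).coeff 0 = 1 := by
  simp [coeff_zero_eq_eval_zero, eval_prod]

lemma coeff_one_prod_one_sub_C_mul_X (s : Finset ι) :
    (∏ i ∈ s, (1 - C (d i) * X)).coeff 1 = -∑ i ∈ s, d i := by
  induction s using Finset.induction_on with
  | empty => simp [coeff_one]
  | insert a s ha ih =>
    rw [coeff_succ_prod_insert_one_sub_C_mul_X d ha, ih, coeff_zero_prod_one_sub_C_mul_X,
      sum_insert ha]
    ring

lemma two_mul_coeff_two_prod_one_sub_C_mul_X (s : Finset ι) :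
    2 * (∏ i ∈ s, (1 - C (d i) * X)).coeff 2 = (∑ i ∈ s, d i) ^ 2 - ∑ i ∈ s, d i ^ 2 := by
  induction s using Finset.induction_on with
  | empty => simp [coeff_one]
  | insert a s ha ih =>
    rw [coeff_succ_prod_insert_one_sub_C_mul_X d ha, coeff_one_prod_one_sub_C_mul_X,
      sum_insert ha, sum_insert ha]
    linear_combination ih

lemma six_mul_coeff_three_prod_one_sub_C_mul_X (s : Finset ι) :
    6 * (∏ i ∈ s, (1 - C (d i) * X)).coeff 3 =
      -((∑ i ∈ s, d i) ^ 3 - 3 * (∑ i ∈ s, d i) * ∑ i ∈ s, d i ^ 2 + 2 * ∑ i ∈ s, d i ^ 3) := by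
  induction s using Finset.induction_on with
  | empty => simp [coeff_one]
  | insert a s ha ih =>
    have h2 := two_mul_coeff_two_prod_one_sub_C_mul_X d s
    rw [coeff_succ_prod_insert_one_sub_C_mul_X d ha, sum_insert ha, sum_insert ha, sum_insert ha]
    linear_combination ih - 3 * d a * h2

end Polynomial

namespace Matrix

open Equiv

variable {V R : Type*} [Fintype V] [CommRing R] (M : Matrix V V R)

lemma natDegree_permanent_diagonal_X_sub_le :
    (diagonal (fun _ : V => (X : R[X])) - M.map C).permanent.natDegree ≤ Fintype.card V := by
  refine natDegree_sum_le_of_forall_le _ _ fun σ _ => (natDegree_prod_le _ _).trans ?_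
  rw [Fintype.card_eq_sum_ones]
  refine sum_le_sum fun i _ => ?_
  rw [sub_apply, diagonal_apply, map_apply]
  split_ifs <;> simp [natDegree_X_le]

lemma reflect_permanent_diagonal_X_sub :
    reflect (Fintype.card V) (diagonal (fun _ : V => (X : R[X])) - M.map C).permanent =
      (1 - (X : R[X]) • M.map C).permanent := by
  rw [permanent, permanent, reflect_sum, Fintype.card_eq_sum_ones]
  refine sum_congr rfl fun σ _ => ?_
  rw [reflect_prod]
  · refine prod_congr rfl fun i _ => ?_
    simp only [sub_apply, diagonal_apply, one_apply, map_apply, smul_apply, smul_eq_mul]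
    split_ifs <;> simp [reflect_sub, reflect_C]
  · intro i _
    rw [sub_apply, diagonal_apply, map_apply]
    split_ifs <;> simp [natDegree_X_le]

lemma permanent_one_sub_X_smul_map_C :
    (1 - (X : R[X]) • M.map C).permanent = ∑ σ : Perm V,
      C (∏ i ∈ σ.support, -M (σ i) i) *
        (X ^ #σ.support * ∏ i ∈ σ.supportᶜ, (1 - C (M i i) * X)) := by
  refine sum_congr rfl fun σ _ => ?_
  rw [← prod_mul_prod_compl σ.support, ← mul_assoc]
  congr 1
  · rw [map_prod, ← prod_const, ← prod_mul_distrib]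
    refine prod_congr rfl fun i hi => ?_
    rw [sub_apply, one_apply_ne (Perm.mem_support.mp hi)]
    simp
  · refine prod_congr rfl fun i hi => ?_
    rw [Perm.notMem_support.mp (mem_compl.mp hi)]
    simp

lemma coeff_permanent_one_sub_X_smul_map_C (k : ℕ) :
    (1 - (X : R[X]) • M.map C).permanent.coeff k = ∑ σ : Perm V, (∏ i ∈ σ.support, -M (σ i) i) *
      if #σ.support ≤ k then
        (∏ i ∈ σ.supportᶜ, (1 - C (M i i) * X)).coeff (k - #σ.support) else 0 := by
  simp only [permanent_one_sub_X_smul_map_C, finsetSum_coeff, coeff_C_mul, coeff_X_pow_mul']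

lemma coeff_card_permanent_diagonal_X_sub :
    (diagonal (fun _ : V => (X : R[X])) - M.map C).permanent.coeff (Fintype.card V) = 1 := by
  rw [← revAt_zero (Fintype.card V), ← coeff_reflect, reflect_permanent_diagonal_X_sub,
    coeff_permanent_one_sub_X_smul_map_C, sum_eq_single 1]
  · simp [coeff_zero_prod_one_sub_C_mul_X]
  · intro σ _ hσ
    rw [if_neg (by simpa using hσ), mul_zero]
  · simp

lemma natDegree_permanent_diagonal_X_sub [Nontrivial R] :
    (diagonal (fun _ : V => (X : R[X])) - M.map C).permanent.natDegree = Fintype.card V :=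
  (natDegree_permanent_diagonal_X_sub_le M).antisymm
    (le_natDegree_of_ne_zero (by simp [coeff_card_permanent_diagonal_X_sub]))

lemma reverse_permanent_diagonal_X_sub [Nontrivial R] :
    (diagonal (fun _ : V => (X : R[X])) - M.map C).permanent.reverse =
      (1 - (X : R[X]) • M.map C).permanent := by
  rw [reverse, natDegree_permanent_diagonal_X_sub, reflect_permanent_diagonal_X_sub]

end Matrix

namespace Equiv.Perm

variable {α M : Type*} [Fintype α] [AddCommMonoid M]

lemma sum_eq_of_card_support_le_three (f : Perm α → M)
    (hf : ∀ σ : Perm α, 3 < #σ.support → f σ = 0) :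
    ∑ σ, f σ = f 1 + ∑ σ with #σ.support = 2, f σ + ∑ σ with #σ.support = 3, f σ := by
  have split : ∀ σ : Perm α, f σ = (if σ = 1 then f σ else 0) +
      (if #σ.support = 2 then f σ else 0) + (if #σ.support = 3 then f σ else 0) := by
    intro σ
    have h1 := card_support_ne_one σ
    have h0 : #σ.support = 0 ↔ σ = 1 := card_support_eq_zero
    by_cases h : 3 < #σ.support
    · rw [hf σ h]; simp
    · interval_cases hs : #σ.support <;> simp_all
  rw [sum_congr rfl fun σ _ => split σ, sum_add_distrib, sum_add_distrib, sum_ite_eq',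
    sum_filter, sum_filter]
  simp

lemma apply_eq_or_apply_eq_of_card_support_le_three {σ : Perm α} (hσ : #σ.support ≤ 3)
    {u v : α} (hu : u ∈ σ.support) (hv : v ∈ σ.support) (huv : u ≠ v) :
    σ u = v ∨ σ v = u := by
  by_contra! h
  have hu' : σ u ≠ u := mem_support.mp hu
  have hv' : σ v ≠ v := mem_support.mp hv
  have huv' : σ u ≠ σ v := σ.injective.ne huv
  have hsub : ({u, v, σ u, σ v} : Finset α) ⊆ σ.support := by
    intro x hx
    simp only [mem_insert, mem_singleton] at hx
    rcases hx with rfl | rfl | rfl | rfl <;> simp_all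
  have hcard : #({u, v, σ u, σ v} : Finset α) = 4 := by
    rw [card_insert_of_notMem (by simp [huv, hu'.symm, h.2.symm]),
      card_insert_of_notMem (by simp [h.1.symm, hv'.symm]), card_pair huv']
  have := card_le_card hsub
  omega

lemma card_filter_support_eq (t : Finset α) :
    #{σ : Perm α | σ.support = t} = numDerangements #t := by
  rw [← Fintype.card_coe t, ← card_derangements_eq_numDerangements, ← Fintype.card_coe,
    Fintype.card_congr (derangements.subtypeEquiv (· ∈ t))]
  refine Fintype.card_congr (Equiv.subtypeEquivRight fun σ => ?_)
  simp only [mem_filter, mem_univ, true_and, Finset.ext_iff, mem_support, Function.mem_fixedPoints,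
    Function.IsFixedPt]
  exact forall_congr' fun a => by tauto

lemma sum_filter_card_support_eq (k : ℕ) (g : Finset α → M) :
    ∑ σ : Perm α with #σ.support = k, g σ.support = numDerangements k • ∑ t with #t = k, g t := by
  rw [smul_sum, ← sum_fiberwise_of_maps_to (g := support) (t := {t : Finset α | #t = k})
    (fun σ hσ => by simpa using hσ)]
  refine sum_congr rfl fun t ht => ?_
  rw [mem_filter] at ht
  rw [sum_congr rfl fun σ hσ => congrArg g (mem_filter.mp hσ).2, sum_const, ← ht.2,
    ← card_filter_support_eq, filter_filter]
  congr 2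
  ext σ
  simp only [mem_filter, mem_univ, true_and, and_iff_right_iff_imp]
  exact fun h => h ▸ rfl

end Equiv.Perm

namespace SimpleGraph

open Equiv

variable {V : Type*} [Fintype V] (G : SimpleGraph V) {R : Type*} [CommRing R]

lemma lapMatrix_apply_self (v : V) : G.lapMatrix R v v = G.degree v := by
  simp [lapMatrix, degMatrix]

lemma neg_lapMatrix_apply_of_ne {u v : V} (h : u ≠ v) :
    -G.lapMatrix R u v = if G.Adj u v then 1 else 0 := by
  simp [lapMatrix, degMatrix, Matrix.diagonal_apply_ne _ h]

lemma prod_support_neg_lapMatrix_of_card_le_three {σ : Perm V} (hσ : #σ.support ≤ 3) :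
    ∏ i ∈ σ.support, -G.lapMatrix R (σ i) i = if G.IsClique (σ.support : Set V) then 1 else 0 := by
  have hclique : (∀ i ∈ σ.support, G.Adj (σ i) i) ↔ G.IsClique (σ.support : Set V) := by
    refine ⟨fun hadj u hu v hv huv => ?_, fun hc i hi => ?_⟩
    · rcases Perm.apply_eq_or_apply_eq_of_card_support_le_three hσ hu hv huv with h | h
      · exact h ▸ (hadj u hu).symm
      · exact h ▸ hadj v hv
    · exact hc (Perm.apply_mem_support.mpr hi) hi (Perm.mem_support.mp hi)
  simp_rw [prod_congr rfl fun i hi => G.neg_lapMatrix_apply_of_ne (Perm.mem_support.mp hi),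
    prod_boole, hclique]

lemma sum_filter_card_support_eq_sum_cliqueFinset {k : ℕ} (hk : k ≤ 3) (g : Finset V → R) :
    ∑ σ : Perm V with #σ.support = k, (∏ i ∈ σ.support, -G.lapMatrix R (σ i) i) * g σ.support =
      numDerangements k • ∑ t ∈ G.cliqueFinset k, g t := by
  have hclique : G.cliqueFinset k =
      Finset.filter (fun t : Finset V => G.IsClique (t : Set V)) {t | #t = k} := by
    ext t
    simp [mem_cliqueFinset_iff, isNClique_iff, and_comm]
  rw [hclique, sum_filter (s := {t | #t = k}), ← Perm.sum_filter_card_support_eq]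
  refine sum_congr rfl fun σ hσ => ?_
  rw [G.prod_support_neg_lapMatrix_of_card_le_three ((mem_filter.mp hσ).2.trans_le hk), ite_mul,
    one_mul, zero_mul]

lemma card_filter_mem_cliqueFinset_two (v : V) :
    #{t ∈ G.cliqueFinset 2 | v ∈ t} = G.degree v := by
  rw [← card_neighborFinset_eq_degree]
  symm
  refine card_bij (fun w _ => {v, w}) (fun w hw => ?_) (fun w₁ hw₁ w₂ hw₂ h => ?_) fun t ht => ?_
  · rw [mem_neighborFinset] at hw
    simp [mem_cliqueFinset_iff, isNClique_iff, card_pair hw.ne, hw]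
  · have : w₁ ∈ ({v, w₂} : Finset V) := h ▸ mem_insert_of_mem (mem_singleton_self w₁)
    rw [mem_neighborFinset] at hw₁
    simpa [hw₁.ne.symm] using this
  · rw [mem_filter, mem_cliqueFinset_iff, isNClique_iff, card_eq_two] at ht
    obtain ⟨⟨hc, a, b, hab, rfl⟩, hv⟩ := ht
    have hadj : G.Adj a b := (isClique_pair.mp (by simpa using hc)) hab
    rcases mem_insert.mp hv with rfl | hv
    · exact ⟨b, by simpa using hadj, rfl⟩
    · rw [mem_singleton.mp hv]
      exact ⟨a, by simpa using hadj.symm, pair_comm _ _⟩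

lemma sum_cliqueFinset_two_sum {M : Type*} [AddCommMonoid M] (f : V → M) :
    ∑ t ∈ G.cliqueFinset 2, ∑ i ∈ t, f i = ∑ i, G.degree i • f i := by
  rw [sum_comm' (t' := univ) (s' := fun i => {t ∈ G.cliqueFinset 2 | i ∈ t}) (by simp)]
  simp [card_filter_mem_cliqueFinset_two]

lemma two_mul_card_cliqueFinset_two : 2 * #(G.cliqueFinset 2) = ∑ v, G.degree v := by
  have h := G.sum_cliqueFinset_two_sum fun _ => 1
  simp only [sum_const, smul_eq_mul, mul_one] at h
  rw [← h, sum_congr rfl fun t ht => (mem_cliqueFinset_iff.mp ht).2, sum_const, smul_eq_mul,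
    mul_comm]

lemma coeff_permanent_one_sub_X_smul_lapMatrix {k : ℕ} (hk : k ≤ 3) :
    (1 - (X : R[X]) • (G.lapMatrix R).map C).permanent.coeff k =
      (∏ i, (1 - C (G.degree i : R) * X)).coeff k +
      ∑ t ∈ G.cliqueFinset 2, (X ^ 2 * ∏ i ∈ tᶜ, (1 - C (G.degree i : R) * X)).coeff k +
      2 * ∑ t ∈ G.cliqueFinset 3, (X ^ 3 * ∏ i ∈ tᶜ, (1 - C (G.degree i : R) * X)).coeff k := by
  set Q : Finset V → R[X] := fun s => ∏ i ∈ s, (1 - C (G.degree i : R) * X)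
  have hfilter {n : ℕ} (hn : n ≤ 3) : ∑ σ : Perm V with #σ.support = n,
      (∏ i ∈ σ.support, -G.lapMatrix R (σ i) i) * (X ^ #σ.support * Q σ.supportᶜ).coeff k =
        numDerangements n • ∑ t ∈ G.cliqueFinset n, (X ^ n * Q tᶜ).coeff k := by
    rw [← G.sum_filter_card_support_eq_sum_cliqueFinset hn]
    exact sum_congr rfl fun σ hσ => by rw [(mem_filter.mp hσ).2]
  simp only [Matrix.permanent_one_sub_X_smul_map_C, finsetSum_coeff, coeff_C_mul,
    lapMatrix_apply_self]
  rw [Perm.sum_eq_of_card_support_le_three _ fun σ hσ => by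
      rw [coeff_X_pow_mul', if_neg (by omega), mul_zero],
    hfilter (by norm_num), hfilter le_rfl]
  simp only [Perm.support_one, prod_empty, card_empty, pow_zero, compl_empty, one_mul]
  norm_num [numDerangements, Q]

end SimpleGraph

section lapPermPoly

variable {V : Type*} [Fintype V] (G : SimpleGraph V)

lemma natDegree_lapPermPoly : (lapPermPoly G).natDegree = Fintype.card V :=
  Matrix.natDegree_permanent_diagonal_X_sub _

lemma coeff_one_reverse_lapPermPoly :
    (lapPermPoly G).reverse.coeff 1 = -∑ v, (G.degree v : ℚ) := by
  rw [lapPermPoly, Matrix.reverse_permanent_diagonal_X_sub,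
    G.coeff_permanent_one_sub_X_smul_lapMatrix (by norm_num), coeff_one_prod_one_sub_C_mul_X]
  simp [coeff_X_pow_mul']

lemma two_mul_coeff_two_reverse_lapPermPoly :
    2 * (lapPermPoly G).reverse.coeff 2 =
      (∑ v, (G.degree v : ℚ)) ^ 2 - ∑ v, (G.degree v : ℚ) ^ 2 + ∑ v, (G.degree v : ℚ) := by
  have hedges : (2 * #(G.cliqueFinset 2) : ℚ) = ∑ v, (G.degree v : ℚ) := by
    exact_mod_cast G.two_mul_card_cliqueFinset_two
  rw [lapPermPoly, Matrix.reverse_permanent_diagonal_X_sub,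
    G.coeff_permanent_one_sub_X_smul_lapMatrix (by norm_num), mul_add, mul_add,
    two_mul_coeff_two_prod_one_sub_C_mul_X]
  simp only [coeff_X_pow_mul', le_refl, if_true, Nat.sub_self, coeff_zero_prod_one_sub_C_mul_X]
  norm_num [hedges]

lemma six_mul_coeff_three_reverse_lapPermPoly :
    6 * (lapPermPoly G).reverse.coeff 3 =
      -((∑ v, (G.degree v : ℚ)) ^ 3 - 3 * (∑ v, (G.degree v : ℚ)) * ∑ v, (G.degree v : ℚ) ^ 2
        + 2 * ∑ v, (G.degree v : ℚ) ^ 3)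
      - 3 * (∑ v, (G.degree v : ℚ)) ^ 2 + 6 * ∑ v, (G.degree v : ℚ) ^ 2
      + 12 * (triangleCount G : ℚ) := by
  have hedges : (2 * #(G.cliqueFinset 2) : ℚ) = ∑ v, (G.degree v : ℚ) := by
    exact_mod_cast G.two_mul_card_cliqueFinset_two
  have hcompl (t : Finset V) :
      ∑ i ∈ tᶜ, (G.degree i : ℚ) = ∑ v, (G.degree v : ℚ) - ∑ i ∈ t, (G.degree i : ℚ) :=
    eq_sub_of_add_eq (sum_compl_add_sum t _)
  have hpairs : ∑ t ∈ G.cliqueFinset 2, ∑ i ∈ tᶜ, (G.degree i : ℚ) =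
      #(G.cliqueFinset 2) * ∑ v, (G.degree v : ℚ) - ∑ v, (G.degree v : ℚ) ^ 2 := by
    simp only [hcompl, sum_sub_distrib, sum_const, nsmul_eq_mul, G.sum_cliqueFinset_two_sum,
      sq]
  rw [lapPermPoly, Matrix.reverse_permanent_diagonal_X_sub,
    G.coeff_permanent_one_sub_X_smul_lapMatrix le_rfl, mul_add, mul_add,
    six_mul_coeff_three_prod_one_sub_C_mul_X]
  simp only [coeff_X_pow_mul', le_refl, if_true, Nat.sub_self, coeff_zero_prod_one_sub_C_mul_X,
    show 2 ≤ 3 by norm_num, show 3 - 2 = 1 from rfl, coeff_one_prod_one_sub_C_mul_X,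
    sum_neg_distrib, hpairs, sum_const, triangleCount]
  norm_num
  linear_combination (-3 * ∑ v, (G.degree v : ℚ)) * hedges

end lapPermPoly

/-- **Lemma 2.3.** If two graphs have the same Laplacian permanental polynomial, then they
have the same number of vertices, the same number of edges, the same sum of squares of
vertex degrees, and the same value of `∑ dᵢ³ − 6·c₃`, where `c₃` is the number of
triangles. -/
theorem lapPermPoly_invariants
    {V W : Type*} [Fintype V] [Fintype W] (G : SimpleGraph V) (H : SimpleGraph W)
    (h : lapPermPoly G = lapPermPoly H) :
    Fintype.card V = Fintype.card W ∧
    G.edgeFinset.card = H.edgeFinset.card ∧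
    (∑ v, (G.degree v) ^ 2) = (∑ w, (H.degree w) ^ 2) ∧
    ((∑ v, (G.degree v : ℤ) ^ 3) - 6 * (triangleCount G : ℤ)
      = (∑ w, (H.degree w : ℤ) ^ 3) - 6 * (triangleCount H : ℤ)) := by
  have hrev : (lapPermPoly G).reverse = (lapPermPoly H).reverse := by rw [h]
  have hp1 : ∑ v, (G.degree v : ℚ) = ∑ w, (H.degree w : ℚ) := by
    have := congrArg (coeff · 1) hrev
    simp only [coeff_one_reverse_lapPermPoly] at this
    linarith
  have hp2 : ∑ v, (G.degree v : ℚ) ^ 2 = ∑ w, (H.degree w : ℚ) ^ 2 := by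
    have := congrArg (2 * coeff · 2) hrev
    simp only [two_mul_coeff_two_reverse_lapPermPoly, hp1] at this
    linarith
  have hp3 : ∑ v, (G.degree v : ℚ) ^ 3 - 6 * triangleCount G =
      ∑ w, (H.degree w : ℚ) ^ 3 - 6 * triangleCount H := by
    have := congrArg (6 * coeff · 3) hrev
    simp only [six_mul_coeff_three_reverse_lapPermPoly, hp1, hp2] at this
    linarith
  refine ⟨by rw [← natDegree_lapPermPoly G, h, natDegree_lapPermPoly], ?_, by exact_mod_cast hp2,
    by exact_mod_cast hp3⟩
  have := G.sum_degrees_eq_twice_card_edges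
  have := H.sum_degrees_eq_twice_card_edges
  have : ∑ v, G.degree v = ∑ w, H.degree w := by exact_mod_cast hp1
  omega
end
end

section
/- Let G be a simple graph with n vertices, m edges and degree sequence (d_1, …, d_n), and write its signless Laplacian permanental polynomial as π(Q(G); x) = Σ_i q_i(G) x^{n−i}. Then: (i) q_0(G) = 1; (ii) q_1(G) = −2m; (iii) q_2(G) = 2m² + m − (1/2) Σ_i d_i²; and (iv) q_3(G) = −(1/3) Σ_i d_i³ + (m+1) Σ_i d_i² − (4/3)m³ − 2m² − 2c₃(G), where c₃(G) is the number of triangles in G. -/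
open scoped Classical
open Polynomial

noncomputable section

/-- The signless Laplacian matrix `Q(G) = D(G) + A(G)` of a graph `G`. -/
def signlessLapMatrix {V : Type*} [Fintype V] (G : SimpleGraph V) : Matrix V V ℚ :=
  G.degMatrix ℚ + G.adjMatrix ℚ

/-- The signless Laplacian permanental polynomial `per(x·I − Q(G))` of a graph `G`. -/
def qPermPoly {V : Type*} [Fintype V] (G : SimpleGraph V) : Polynomial ℚ :=
  Matrix.permanent
    (Matrix.diagonal (fun _ : V => (X : Polynomial ℚ)) - (signlessLapMatrix G).map Polynomial.C)

/-!
Expanding `per(x I - Q)` multilinearly, the coefficient of `x ^ (n - k)` is `(-1) ^ k` times the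
sum of the permanents of the `k × k` principal submatrices of `Q`. For `k ≤ 3` these permanents
are explicit: diagonal entries of `Q` are degrees, off-diagonal ones adjacency indicators, and the
two `3`-cycles on `{a, b, c}` contribute `2` exactly when `{a, b, c}` is a triangle. Summing over
ordered tuples of distinct vertices and removing the tuples with repeated entries by
inclusion–exclusion, everything reduces to power sums of the degrees, the handshake identity
`∑ dᵢ = 2m` and `∑ A_ab A_ac A_bc = 6 c₃`.
-/

open Finset Equiv Polynomial

section PermsOfFinset

variable {α β : Type*} [DecidableEq α] [AddCommMonoid β]

theorem sum_permsOfFinset_insert {a : α} {s : Finset α} (ha : a ∉ s) (f : Perm α → β) :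
    ∑ τ ∈ permsOfFinset (insert a s), f τ =
      ∑ j ∈ insert a s, ∑ σ ∈ permsOfFinset s, f (swap a j * σ) := by
  rw [← sum_product']
  refine (sum_nbij' (fun p => swap a p.1 * p.2) (fun τ => (τ a, swap a (τ a) * τ))
    ?_ ?_ ?_ ?_ ?_).symm
  · rintro ⟨j, σ⟩ h
    rw [mem_product, mem_perms_of_finset_iff] at h
    rw [mem_perms_of_finset_iff]
    intro x hx
    by_contra hxs
    have hxa : x ≠ a := fun e => hxs (e ▸ mem_insert_self a s)
    have hxj : x ≠ j := fun e => hxs (e ▸ h.1)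
    have hσx : σ x = x := by_contra fun h' => hxs (mem_insert_of_mem (h.2 h'))
    exact hx (by rw [Perm.mul_apply, hσx, swap_apply_of_ne_of_ne hxa hxj])
  · intro τ h
    rw [mem_perms_of_finset_iff] at h
    rw [mem_product, mem_perms_of_finset_iff]
    refine ⟨?_, fun {x} hx => ?_⟩
    · show τ a ∈ insert a s
      rcases eq_or_ne (τ a) a with e | e
      · exact e.symm ▸ mem_insert_self a s
      · exact h (τ.injective.ne e)
    by_contra hxs
    rcases eq_or_ne x a with rfl | hxa
    · exact hx (by rw [Perm.mul_apply, swap_apply_right])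
    have hτx : τ x = x := by_contra fun h' => (mem_insert.1 (h h')).elim hxa hxs
    have hxτa : x ≠ τ a := fun e => hxa (τ.injective (hτx.trans e))
    exact hx (by rw [Perm.mul_apply, hτx, swap_apply_of_ne_of_ne hxa hxτa])
  · rintro ⟨j, σ⟩ h
    rw [mem_product, mem_perms_of_finset_iff] at h
    have hσa : σ a = a := by_contra fun h' => ha (h.2 h')
    simp [hσa, ← mul_assoc]
  · intro τ _
    simp [← mul_assoc]
  · intro _ _; rfl

theorem permsOfFinset_empty : permsOfFinset (∅ : Finset α) = {1} :=
  eq_singleton_iff_unique_mem.2 ⟨mem_perms_of_finset_iff.2 fun h => absurd rfl h,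
    fun _ h => Equiv.ext fun x =>
      by_contra fun h' => notMem_empty x (mem_perms_of_finset_iff.1 h h')⟩

theorem sum_permsOfFinset_singleton (a : α) (f : Perm α → β) :
    ∑ σ ∈ permsOfFinset {a}, f σ = f 1 := by
  rw [← insert_empty, sum_permsOfFinset_insert (notMem_empty a), permsOfFinset_empty]
  simp only [insert_empty, sum_singleton, mul_one, swap_self]
  rfl

theorem permsOfFinset_eq_filter [Fintype α] (s : Finset α) :
    permsOfFinset s = ({σ | ∀ i ∈ univ \ s, σ i = i} : Finset (Perm α)) := by
  ext σ
  simp only [mem_filter, mem_univ, true_and, mem_sdiff, mem_perms_of_finset_iff]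
  exact ⟨fun h x hxs => by_contra fun hx => hxs (h hx),
    fun h x hx => by_contra fun hxs => hx (h x hxs)⟩

end PermsOfFinset

namespace Matrix

variable {n R : Type*} [DecidableEq n]

section CommSemiring

variable [CommSemiring R] (M : Matrix n n R)

-- The permanent of the principal submatrix `M[T, T]`, written as a sum over the permutations
-- of `n` that fix every point outside `T`.
def principalPermanent (T : Finset n) : R :=
  ∑ σ ∈ permsOfFinset T, ∏ i ∈ T, M (σ i) i

theorem principalPermanent_empty : M.principalPermanent ∅ = 1 := by
  simp [principalPermanent, permsOfFinset_empty]

theorem principalPermanent_singleton (a : n) : M.principalPermanent {a} = M a a := by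
  simp [principalPermanent, sum_permsOfFinset_singleton]

theorem principalPermanent_pair {a b : n} (hab : a ≠ b) :
    M.principalPermanent {a, b} = M a a * M b b + M a b * M b a := by
  rw [principalPermanent, sum_permsOfFinset_insert (by simpa using hab)]
  simp only [Perm.coe_mul, Function.comp_apply, mem_singleton, hab, not_false_eq_true,
    prod_insert, prod_singleton, sum_permsOfFinset_singleton, Perm.coe_one, id_eq,
    swap_apply_left, sum_insert, swap_self, refl_apply, sum_singleton, swap_apply_right]
  ring

theorem principalPermanent_triple {a b c : n} (hab : a ≠ b) (hac : a ≠ c) (hbc : b ≠ c) :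
    M.principalPermanent {a, b, c} =
      M a a * M b b * M c c + M a a * M b c * M c b + M b b * M a c * M c a +
        M c c * M a b * M b a + M a b * M b c * M c a + M a c * M c b * M b a := by
  rw [principalPermanent, sum_permsOfFinset_insert (by simp [hab, hac])]
  simp only [Perm.coe_mul, Function.comp_apply, mem_insert, mem_singleton, hab, hac, hbc,
    hab.symm, hac.symm, hbc.symm, or_self, not_false_eq_true, ne_eq, prod_insert, prod_singleton,
    sum_insert, sum_singleton, sum_permsOfFinset_insert, sum_permsOfFinset_singleton,
    Perm.coe_one, id_eq, swap_self, refl_apply, swap_apply_left, swap_apply_right,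
    swap_apply_of_ne_of_ne]
  ring

end CommSemiring

variable [CommRing R] [Fintype n] (M : Matrix n n R)

theorem permanent_diagonal_X_sub_map_C :
    (diagonal (fun _ => (X : R[X])) - M.map C).permanent =
      ∑ T : Finset n, C ((-1) ^ #T * M.principalPermanent T) * X ^ (Fintype.card n - #T) := by
  have entry (σ : Perm n) (i : n) :
      (diagonal (fun _ => (X : R[X])) - M.map C : Matrix n n R[X]) (σ i) i =
      -C (M (σ i) i) + if σ i = i then X else 0 := by
    simp [diagonal_apply, sub_eq_neg_add]
  simp only [permanent, entry, prod_add, prod_ite_zero, prod_const, powerset_univ, mul_ite,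
    mul_zero]
  rw [sum_comm]
  refine sum_congr rfl fun T _ => ?_
  rw [← sum_filter, ← permsOfFinset_eq_filter, principalPermanent, card_univ_sdiff]
  simp only [prod_neg, map_mul, map_pow, map_neg, map_one, map_sum, map_prod, mul_sum, sum_mul]

theorem coeff_permanent_diagonal_X_sub_map_C {k : ℕ} (hk : k ≤ Fintype.card n) :
    (diagonal (fun _ => (X : R[X])) - M.map C).permanent.coeff (Fintype.card n - k) =
      (-1) ^ k * ∑ T ∈ powersetCard k univ, M.principalPermanent T := by
  rw [permanent_diagonal_X_sub_map_C, finsetSum_coeff, ← univ_filter_card_eq, sum_filter,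
    mul_sum]
  refine sum_congr rfl fun T _ => ?_
  have := card_le_univ T
  rw [coeff_C_mul_X_pow]
  by_cases hT : #T = k
  · simp [hT]
  · rw [if_neg (by omega), if_neg hT, mul_zero]

end Matrix

section PowersetCard

variable {α β : Type*} [DecidableEq α] [AddCommMonoid β]

theorem succ_nsmul_sum_powersetCard_succ (s : Finset α) (k : ℕ) (F : Finset α → β) :
    (k + 1) • ∑ t ∈ s.powersetCard (k + 1), F t =
      ∑ a ∈ s, ∑ t ∈ (s.erase a).powersetCard k, F (insert a t) := by
  have hcard (t) (ht : t ∈ s.powersetCard (k + 1)) : (k + 1) • F t = ∑ _a ∈ t, F t := by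
    rw [sum_const, (mem_powersetCard.1 ht).2]
  rw [smul_sum, sum_congr rfl hcard, sum_sigma', sum_sigma']
  refine sum_nbij' (fun p => ⟨p.2, p.1.erase p.2⟩) (fun p => ⟨insert p.1 p.2, p.1⟩)
    ?_ ?_ ?_ ?_ ?_
  · rintro ⟨t, a⟩ h
    simp only [mem_sigma, mem_powersetCard] at h ⊢
    obtain ⟨⟨hts, htk⟩, hat⟩ := h
    exact ⟨hts hat, erase_subset_erase a hts, by rw [card_erase_of_mem hat, htk]; rfl⟩
  · rintro ⟨a, u⟩ h
    simp only [mem_sigma, mem_powersetCard] at h ⊢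
    obtain ⟨has, hus, huk⟩ := h
    have hau : a ∉ u := fun h => (mem_erase.1 (hus h)).1 rfl
    exact ⟨⟨insert_subset has (hus.trans (erase_subset a s)),
      by rw [card_insert_of_notMem hau, huk]⟩, mem_insert_self a u⟩
  · rintro ⟨t, a⟩ h
    simp only [mem_sigma] at h
    simp [insert_erase h.2]
  · rintro ⟨a, u⟩ h
    simp only [mem_sigma, mem_powersetCard] at h
    have hau : a ∉ u := fun h' => (mem_erase.1 (h.2.1 h')).1 rfl
    simp [erase_insert hau]
  · rintro ⟨t, a⟩ h
    simp only [mem_sigma] at h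
    simp [insert_erase h.2]

theorem two_nsmul_sum_powersetCard_two (s : Finset α) (F : Finset α → β) :
    2 • ∑ t ∈ s.powersetCard 2, F t = ∑ a ∈ s, ∑ b ∈ s.erase a, F {a, b} := by
  rw [succ_nsmul_sum_powersetCard_succ]
  simp only [powersetCard_one, sum_map, Function.Embedding.coeFn_mk]

theorem six_nsmul_sum_powersetCard_three (s : Finset α) (F : Finset α → β) :
    6 • ∑ t ∈ s.powersetCard 3, F t =
      ∑ a ∈ s, ∑ b ∈ s.erase a, ∑ c ∈ (s.erase a).erase b, F {a, b, c} := by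
  rw [show 6 = (2 + 1) * 2 from rfl, mul_nsmul, succ_nsmul_sum_powersetCard_succ, smul_sum]
  exact sum_congr rfl fun a _ => two_nsmul_sum_powersetCard_two _ _

end PowersetCard

section Sums

variable {α β : Type*} [DecidableEq α] [Fintype α] [AddCommGroup β]

theorem sum_sum_erase (f : α → α → β) :
    ∑ a, ∑ b ∈ univ.erase a, f a b = ∑ a, ∑ b, f a b - ∑ a, f a a := by
  simp only [sum_erase_eq_sub (mem_univ _), sum_sub_distrib]

theorem sum_sum_sum_erase_erase_of_symm (f : α → α → α → β)
    (h₁₂ : ∀ a b c, f a b c = f b a c) (h₂₃ : ∀ a b c, f a b c = f a c b) :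
    ∑ a, ∑ b ∈ univ.erase a, ∑ c ∈ (univ.erase a).erase b, f a b c =
      ∑ a, ∑ b, ∑ c, f a b c - 3 • ∑ a, ∑ c, f a a c + 2 • ∑ a, f a a a := by
  have inner (a b) (hb : b ∈ univ.erase a) :
      ∑ c ∈ (univ.erase a).erase b, f a b c = ∑ c, f a b c - f a a b - f b b a := by
    rw [sum_erase_eq_sub hb, sum_erase_eq_sub (mem_univ a), h₂₃ a b a, h₁₂ a b b,
      h₂₃ b a b]
  have swap_diag : ∑ a, ∑ b, f b b a = ∑ a, ∑ c, f a a c := sum_comm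
  rw [sum_congr rfl fun a _ => sum_congr rfl (inner a), sum_sum_erase]
  simp only [sum_sub_distrib, swap_diag]
  abel

end Sums

namespace SimpleGraph

variable {V : Type*} (G : SimpleGraph V)

theorem adjMatrix_apply_mul_self {α : Type*} [MulZeroOneClass α] (a b : V) :
    G.adjMatrix α a b * G.adjMatrix α a b = G.adjMatrix α a b := by
  by_cases h : G.Adj a b <;> simp [h]

theorem adjMatrix_apply_self {α : Type*} [Zero α] [One α] (a : V) : G.adjMatrix α a a = 0 := by
  simp

variable [Fintype V]

theorem sum_adjMatrix_apply {α : Type*} [NonAssocSemiring α] (a : V) :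
    ∑ b, G.adjMatrix α a b = G.degree a := by
  simp [adjMatrix_apply, ← card_neighborFinset_eq_degree, neighborFinset_eq_filter]

theorem signlessLapMatrix_apply_self (a : V) : signlessLapMatrix G a a = G.degree a := by
  simp [signlessLapMatrix, degMatrix]

theorem signlessLapMatrix_apply_of_ne {a b : V} (h : a ≠ b) :
    signlessLapMatrix G a b = G.adjMatrix ℚ a b := by
  simp [signlessLapMatrix, degMatrix, h]

theorem principalPermanent_signlessLapMatrix_pair {a b : V} (hab : a ≠ b) :
    (signlessLapMatrix G).principalPermanent {a, b} =
      G.degree a * G.degree b + G.adjMatrix ℚ a b := by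
  rw [Matrix.principalPermanent_pair _ hab, signlessLapMatrix_apply_self,
    signlessLapMatrix_apply_self, signlessLapMatrix_apply_of_ne G hab,
    signlessLapMatrix_apply_of_ne G hab.symm, G.isSymm_adjMatrix.apply a b,
    adjMatrix_apply_mul_self]

theorem principalPermanent_signlessLapMatrix_triple {a b c : V} (hab : a ≠ b) (hac : a ≠ c)
    (hbc : b ≠ c) :
    (signlessLapMatrix G).principalPermanent {a, b, c} =
      G.degree a * G.degree b * G.degree c + G.degree a * G.adjMatrix ℚ b c +
        G.degree b * G.adjMatrix ℚ a c + G.degree c * G.adjMatrix ℚ a b +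
        2 * (G.adjMatrix ℚ a b * G.adjMatrix ℚ a c * G.adjMatrix ℚ b c) := by
  simp only [Matrix.principalPermanent_triple _ hab hac hbc, signlessLapMatrix_apply_self,
    signlessLapMatrix_apply_of_ne G hab, signlessLapMatrix_apply_of_ne G hab.symm,
    signlessLapMatrix_apply_of_ne G hac, signlessLapMatrix_apply_of_ne G hac.symm,
    signlessLapMatrix_apply_of_ne G hbc, signlessLapMatrix_apply_of_ne G hbc.symm,
    G.isSymm_adjMatrix.apply a b, G.isSymm_adjMatrix.apply a c, G.isSymm_adjMatrix.apply b c]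
  linear_combination (G.degree a : ℚ) * G.adjMatrix_apply_mul_self (α := ℚ) b c +
    (G.degree b : ℚ) * G.adjMatrix_apply_mul_self (α := ℚ) a c +
    (G.degree c : ℚ) * G.adjMatrix_apply_mul_self (α := ℚ) a b

theorem sum_adjMatrix_mul_mul_eq_six_mul_triangleCount :
    ∑ a, ∑ b, ∑ c, G.adjMatrix ℚ a b * G.adjMatrix ℚ a c * G.adjMatrix ℚ b c =
      6 * triangleCount G := by
  have hA := G.isSymm_adjMatrix (α := ℚ)
  have htriple (a b c : V) : (if G.IsNClique 3 {a, b, c} then 1 else 0 : ℚ) =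
      G.adjMatrix ℚ a b * G.adjMatrix ℚ a c * G.adjMatrix ℚ b c := by
    by_cases hab : G.Adj a b <;> by_cases hac : G.Adj a c <;> by_cases hbc : G.Adj b c <;>
      simp [is3Clique_triple_iff, hab, hac, hbc]
  have hcliques : ({t ∈ powersetCard 3 univ | G.IsNClique 3 t} : Finset (Finset V)) =
      G.cliqueFinset 3 := by
    ext t
    simp only [mem_filter, mem_powersetCard_univ, mem_cliqueFinset_iff, and_iff_right_iff_imp]
    exact IsNClique.card_eq
  calc ∑ a, ∑ b, ∑ c, G.adjMatrix ℚ a b * G.adjMatrix ℚ a c * G.adjMatrix ℚ b c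
      = ∑ a, ∑ b ∈ univ.erase a, ∑ c ∈ (univ.erase a).erase b,
          G.adjMatrix ℚ a b * G.adjMatrix ℚ a c * G.adjMatrix ℚ b c := by
        rw [sum_sum_sum_erase_erase_of_symm _ (fun a b c => by rw [hA.apply a b]; ring)
          (fun a b c => by rw [hA.apply b c]; ring)]
        -- every term with a repeated vertex contains a diagonal entry `A a a = 0`
        simp
    _ = 6 • ∑ t ∈ powersetCard 3 univ, (if G.IsNClique 3 t then 1 else 0 : ℚ) := by
        simp only [six_nsmul_sum_powersetCard_three, htriple]
    _ = 6 * triangleCount G := by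
        rw [sum_boole, hcliques, nsmul_eq_mul, triangleCount]
        norm_num

theorem sum_principalPermanent_signlessLapMatrix_one :
    ∑ T ∈ powersetCard 1 univ, (signlessLapMatrix G).principalPermanent T =
      ∑ v, (G.degree v : ℚ) := by
  simp [powersetCard_one, Matrix.principalPermanent_singleton, signlessLapMatrix_apply_self]

theorem two_mul_sum_principalPermanent_signlessLapMatrix_two :
    2 * ∑ T ∈ powersetCard 2 univ, (signlessLapMatrix G).principalPermanent T =
      (∑ v, (G.degree v : ℚ)) ^ 2 + ∑ v, (G.degree v : ℚ)
        - ∑ v, (G.degree v : ℚ) ^ 2 := by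
  have h := two_nsmul_sum_powersetCard_two univ (signlessLapMatrix G).principalPermanent
  rw [nsmul_eq_mul, Nat.cast_ofNat] at h
  rw [h, sum_congr rfl fun a _ => sum_congr rfl fun b hb =>
    principalPermanent_signlessLapMatrix_pair G (mem_erase.1 hb).1.symm, sum_sum_erase]
  simp only [sum_add_distrib, ← mul_sum, ← sum_mul, sum_adjMatrix_apply, adjMatrix_apply_self,
    add_zero, ← sq]

theorem six_mul_sum_principalPermanent_signlessLapMatrix_three :
    6 * ∑ T ∈ powersetCard 3 univ, (signlessLapMatrix G).principalPermanent T =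
      (∑ v, (G.degree v : ℚ)) ^ 3 + 3 * (∑ v, (G.degree v : ℚ)) ^ 2
        - 3 * (∑ v, (G.degree v : ℚ)) * ∑ v, (G.degree v : ℚ) ^ 2
        - 6 * ∑ v, (G.degree v : ℚ) ^ 2 + 2 * ∑ v, (G.degree v : ℚ) ^ 3
        + 12 * triangleCount G := by
  have hA := G.isSymm_adjMatrix (α := ℚ)
  let f (a b c : V) : ℚ :=
    G.degree a * G.degree b * G.degree c + G.degree a * G.adjMatrix ℚ b c +
      G.degree b * G.adjMatrix ℚ a c + G.degree c * G.adjMatrix ℚ a b +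
      2 * (G.adjMatrix ℚ a b * G.adjMatrix ℚ a c * G.adjMatrix ℚ b c)
  have h := six_nsmul_sum_powersetCard_three univ (signlessLapMatrix G).principalPermanent
  rw [nsmul_eq_mul, Nat.cast_ofNat] at h
  calc _ = ∑ a, ∑ b ∈ univ.erase a, ∑ c ∈ (univ.erase a).erase b, f a b c := by
        rw [h]
        exact sum_congr rfl fun a _ => sum_congr rfl fun b hb => sum_congr rfl fun c hc =>
          principalPermanent_signlessLapMatrix_triple G (mem_erase.1 hb).1.symm
            (mem_erase.1 (mem_erase.1 hc).2).1.symm (mem_erase.1 hc).1.symm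
    _ = ∑ a, ∑ b, ∑ c, f a b c - 3 • ∑ a, ∑ c, f a a c + 2 • ∑ a, f a a a :=
        sum_sum_sum_erase_erase_of_symm f (fun a b c => by simp only [f, hA.apply a b]; ring)
          (fun a b c => by simp only [f, hA.apply b c]; ring)
    _ = _ := by
      simp only [f, sum_add_distrib, ← mul_sum, ← sum_mul, sum_adjMatrix_apply,
        adjMatrix_apply_self, sum_adjMatrix_mul_mul_eq_six_mul_triangleCount, mul_zero, zero_mul,
        add_zero, nsmul_eq_mul, Nat.cast_ofNat, ← sq, ← pow_succ]
      ring

end SimpleGraph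

/-- **Lemma 2.2.** The four leading coefficients of the signless Laplacian permanental
polynomial `π = ∑ᵢ qᵢ xⁿ⁻ⁱ` of a graph `G` with `n` vertices, `m` edges and degrees `dᵢ`:
`q₀ = 1`, `q₁ = −2m`, `q₂ = 2m² + m − (1/2)∑dᵢ²`, and
`q₃ = −(1/3)∑dᵢ³ + (m+1)∑dᵢ² − (4/3)m³ − 2m² - 2c₃(G)`. -/
theorem qPermPoly_coeffs
    {V : Type*} [Fintype V] (G : SimpleGraph V) :
    (qPermPoly G).coeff (Fintype.card V) = 1 ∧
    (1 ≤ Fintype.card V →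
      (qPermPoly G).coeff (Fintype.card V - 1) = -2 * (G.edgeFinset.card : ℚ)) ∧
    (2 ≤ Fintype.card V →
      (qPermPoly G).coeff (Fintype.card V - 2) =
        2 * (G.edgeFinset.card : ℚ) ^ 2 + (G.edgeFinset.card : ℚ)
          - (1/2) * ∑ v, (G.degree v : ℚ) ^ 2) ∧
    (3 ≤ Fintype.card V →
      (qPermPoly G).coeff (Fintype.card V - 3) =
        -(1/3) * ∑ v, (G.degree v : ℚ) ^ 3
          + ((G.edgeFinset.card : ℚ) + 1) * ∑ v, (G.degree v : ℚ) ^ 2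
          - (4/3) * (G.edgeFinset.card : ℚ) ^ 3 - 2 * (G.edgeFinset.card : ℚ) ^ 2
          - 2 * (triangleCount G : ℚ)) := by
  have coeff_eq {k : ℕ} (hk : k ≤ Fintype.card V) :
      (qPermPoly G).coeff (Fintype.card V - k) =
        (-1) ^ k * ∑ T ∈ powersetCard k univ, (signlessLapMatrix G).principalPermanent T :=
    Matrix.coeff_permanent_diagonal_X_sub_map_C _ hk
  have handshake : ∑ v, (G.degree v : ℚ) = 2 * #G.edgeFinset := by
    exact_mod_cast G.sum_degrees_eq_twice_card_edges
  have e₂ := G.two_mul_sum_principalPermanent_signlessLapMatrix_two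
  have e₃ := G.six_mul_sum_principalPermanent_signlessLapMatrix_three
  rw [handshake] at e₂ e₃
  refine ⟨?_, fun h₁ => ?_, fun h₂ => ?_, fun h₃ => ?_⟩
  · simpa [Matrix.principalPermanent_empty] using coeff_eq (Nat.zero_le _)
  · rw [coeff_eq h₁, G.sum_principalPermanent_signlessLapMatrix_one, handshake]
    ring
  · rw [coeff_eq h₂]
    linear_combination (1 / 2 : ℚ) * e₂
  · rw [coeff_eq h₃]
    linear_combination (-1 / 6 : ℚ) * e₃
end
end

section
/- For every integer n ≥ 3, the signless Laplacian permanental polynomial of the cycle C_n evaluated at x = 2 satisfies per(2I − Q(C_n)) = 3(−1)^n + 1. -/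
/-!
Since `Cₙ` is 2-regular, `2I − Q(Cₙ) = −A(Cₙ)`, so the value is `(−1)ⁿ per A(Cₙ)`, and `per A(Cₙ)`
counts the permutations `σ` of `ℤ/n` with `σ i − i = ±1`. The displacement `σ i − i` is
2-periodic: a sign change between `i` and `i + 2` either collides two images or leaves `i + 1`
without a preimage. So `σ` is determined by its displacements at `0` and `1`. For odd `n`, `2` is
invertible and the two displacements agree, leaving the two rotations; for even `n` all four sign
choices give permutations, since each shifts the parity of every vertex.
-/

open scoped Classical
open Polynomial

noncomputable section

/-- The signless Laplacian permanental polynomial of `G` evaluated at `x = 2`: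
`per(2·I − Q(G))`. -/
def qPermAtTwo {V : Type*} [Fintype V] (G : SimpleGraph V) : ℚ :=
  Matrix.permanent (Matrix.diagonal (fun _ : V => (2 : ℚ)) - signlessLapMatrix G)

open Equiv Function

namespace Equiv.Perm

variable {R : Type*} [CommRing R]

def IsUnitStep (σ : Perm R) : Prop := ∀ x, σ x - x ∈ ({1, -1} : Set R)

theorem isUnitStep_addRight {a : R} (ha : a ∈ ({1, -1} : Set R)) :
    (Equiv.addRight a).IsUnitStep := fun x => by simpa using ha

namespace IsUnitStep

variable {σ : Perm R}

theorem sub_periodic (h2 : (2 : R) ≠ 0) (hσ : σ.IsUnitStep) :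
    Periodic (fun x => σ x - x) 2 := by
  intro x
  have hx := hσ x
  have hx2 := hσ (x + 2)
  simp only [Set.mem_insert_iff, Set.mem_singleton_iff] at hx hx2 ⊢
  rcases hx with hx | hx <;> rcases hx2 with hx2 | hx2
  · rw [hx, hx2]
  · exfalso
    have : x + 2 = x := σ.injective (by linear_combination hx2 - hx)
    exact h2 (by linear_combination this)
  · -- a preimage of `x + 1` is `x` or `x + 2`, but these map to `x - 1` and `x + 3`
    exfalso
    obtain ⟨y, hy⟩ := σ.surjective (x + 1)
    have hy' := hσ y
    simp only [Set.mem_insert_iff, Set.mem_singleton_iff, hy] at hy'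
    rcases hy' with hy' | hy'
    · have : y = x := by linear_combination -hy'
      subst this
      exact h2 (by linear_combination hx - hy)
    · have : y = x + 2 := by linear_combination -hy'
      subst this
      exact h2 (by linear_combination hy - hx2)
  · rw [hx, hx2]

end IsUnitStep

end Equiv.Perm

namespace Fin

open Fin.CommRing

variable {n : ℕ}

theorem eq_natCast_mod_two_add_mul_two [NeZero n] (i : Fin n) :
    i = ((i.val % 2 : ℕ) : Fin n) + ((i.val / 2 : ℕ) : Fin n) * 2 := by
  have h := congrArg (Nat.cast : ℕ → Fin n) (Nat.mod_add_div' i.val 2)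
  push_cast at h
  exact h.symm

theorem even_val_add_iff (hn : Even n) (i j : Fin n) :
    Even (i + j).val ↔ (Even i.val ↔ Even j.val) := by
  rw [Fin.val_add, Nat.even_iff, Nat.mod_mod_of_dvd _ (even_iff_two_dvd.mp hn), ← Nat.even_iff,
    Nat.even_add]

theorem not_even_val_one [NeZero n] (hn : Even n) : ¬Even (1 : Fin n).val := by
  rw [Fin.val_one', Nat.one_mod_eq_one.mpr (by rintro rfl; exact Nat.not_even_one hn)]
  exact Nat.not_even_one

theorem even_val_add_iff_not [NeZero n] (hn : Even n) {c : Fin n}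
    (hc : c ∈ ({1, -1} : Set (Fin n))) (i : Fin n) : Even (i + c).val ↔ ¬Even i.val := by
  have h1 := not_even_val_one hn
  rcases hc with rfl | rfl
  · rw [even_val_add_iff hn]; tauto
  · have := even_val_add_iff hn (i + -1) 1
    rw [neg_add_cancel_right] at this
    tauto

end Fin

namespace Equiv.Perm

open Fin.CommRing

variable {n : ℕ} [NeZero n]

theorem IsUnitStep.apply_eq_add_ite {σ : Perm (Fin n)} (h2 : (2 : Fin n) ≠ 0)
    (hσ : σ.IsUnitStep) (i : Fin n) : σ i = i + if Even i.val then σ 0 else σ 1 - 1 := by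
  have key := (hσ.sub_periodic h2).nat_mul (i.val / 2) ((i.val % 2 : ℕ) : Fin n)
  simp only [← Fin.eq_natCast_mod_two_add_mul_two] at key
  rcases Nat.mod_two_eq_zero_or_one i.val with h | h
  · simp only [h, Nat.cast_zero, Nat.even_iff, if_true] at key ⊢
    linear_combination key
  · simp only [h, Nat.cast_one, Nat.even_iff, one_ne_zero, if_false] at key ⊢
    linear_combination key

theorem IsUnitStep.apply_eq_add_apply_zero {σ : Perm (Fin n)} (hn : Odd n)
    (h2 : (2 : Fin n) ≠ 0) (hσ : σ.IsUnitStep) (i : Fin n) : σ i = i + σ 0 := by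
  have hk : (((n + 1) / 2 : ℕ) : Fin n) * 2 = 1 := by
    have h := congrArg (Nat.cast : ℕ → Fin n) (Nat.div_mul_cancel hn.add_one.two_dvd)
    push_cast at h
    rwa [Fin.natCast_self, zero_add] at h
  have key := (hσ.sub_periodic h2).nat_mul ((n + 1) / 2) 0
  simp only [zero_add, hk, sub_zero] at key
  rw [hσ.apply_eq_add_ite h2 i, key]
  simp

def alternatingShift (hn : Even n) {a b : Fin n} (ha : a ∈ ({1, -1} : Set (Fin n)))
    (hb : b ∈ ({1, -1} : Set (Fin n))) : Perm (Fin n) :=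
  Equiv.ofBijective (fun i => i + if Even i.val then a else b) <| Finite.injective_iff_bijective.mp
    fun i j hij => by
      have hpar : ∀ k : Fin n, Even (k + if Even k.val then a else b).val ↔ ¬Even k.val := by
        intro k
        split_ifs
        · exact Fin.even_val_add_iff_not hn ha k
        · exact Fin.even_val_add_iff_not hn hb k
      have hij' : Even i.val ↔ Even j.val := by
        have := hpar i
        rw [hij, hpar j] at this
        tauto
      simp only [hij'] at hij
      exact add_right_cancel hij

theorem alternatingShift_apply (hn : Even n) {a b : Fin n} (ha : a ∈ ({1, -1} : Set (Fin n)))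
    (hb : b ∈ ({1, -1} : Set (Fin n))) (i : Fin n) :
    alternatingShift hn ha hb i = i + if Even i.val then a else b :=
  rfl

theorem isUnitStep_alternatingShift (hn : Even n) {a b : Fin n}
    (ha : a ∈ ({1, -1} : Set (Fin n))) (hb : b ∈ ({1, -1} : Set (Fin n))) :
    (alternatingShift hn ha hb).IsUnitStep := fun i => by
  rw [alternatingShift_apply, add_sub_cancel_left]
  split_ifs
  exacts [ha, hb]

def isUnitStepEquivOfEven (hn : Even n) (h2 : (2 : Fin n) ≠ 0) :
    {σ : Perm (Fin n) // σ.IsUnitStep} ≃ ({1, -1} : Set (Fin n)) × ({1, -1} : Set (Fin n)) where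
  toFun σ := (⟨σ.1 0, by simpa using σ.2 0⟩, ⟨σ.1 1 - 1, σ.2 1⟩)
  invFun ab := ⟨alternatingShift hn ab.1.2 ab.2.2, isUnitStep_alternatingShift hn ab.1.2 ab.2.2⟩
  left_inv σ := Subtype.ext <| Equiv.ext fun i => (σ.2.apply_eq_add_ite h2 i).symm
  right_inv ab := by
    ext
    · simp [alternatingShift_apply]
    · simp only [alternatingShift_apply, if_neg (Fin.not_even_val_one hn), add_sub_cancel_left]

def isUnitStepEquivOfOdd (hn : Odd n) (h2 : (2 : Fin n) ≠ 0) :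
    {σ : Perm (Fin n) // σ.IsUnitStep} ≃ ({1, -1} : Set (Fin n)) where
  toFun σ := ⟨σ.1 0, by simpa using σ.2 0⟩
  invFun a := ⟨Equiv.addRight a.1, isUnitStep_addRight a.2⟩
  left_inv σ := Subtype.ext <| Equiv.ext fun i => (σ.2.apply_eq_add_apply_zero hn h2 i).symm
  right_inv a := by simp

theorem nat_card_isUnitStep (h2 : (2 : Fin n) ≠ 0) :
    Nat.card {σ : Perm (Fin n) // σ.IsUnitStep} = if Even n then 4 else 2 := by
  have hpair : Nat.card ({1, -1} : Set (Fin n)) = 2 := by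
    rw [Nat.card_coe_set_eq, Set.ncard_pair]
    intro h
    exact h2 (by linear_combination h)
  split_ifs with hn
  · rw [Nat.card_congr (isUnitStepEquivOfEven hn h2), Nat.card_prod, hpair]
  · rw [Nat.card_congr (isUnitStepEquivOfOdd (Nat.not_even_iff_odd.mp hn) h2), hpair]

end Equiv.Perm

namespace SimpleGraph

variable {V : Type*} [Fintype V]

theorem permanent_adjMatrix {R : Type*} [CommSemiring R] [DecidableEq V] (G : SimpleGraph V)
    [DecidableRel G.Adj] :
    (G.adjMatrix R).permanent = Nat.card {σ : Perm V // ∀ v, G.Adj (σ v) v} := by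
  simp only [Matrix.permanent, adjMatrix_apply, Fintype.prod_boole, Finset.sum_boole,
    Nat.card_eq_fintype_card, Fintype.card_subtype]

theorem diagonal_sub_signlessLapMatrix {G : SimpleGraph V} [G.LocallyFinite] {d : ℕ}
    (h : G.IsRegularOfDegree d) :
    Matrix.diagonal (fun _ => (d : ℚ)) - signlessLapMatrix G = -G.adjMatrix ℚ := by
  have hdeg : G.degMatrix ℚ = Matrix.diagonal fun _ => (d : ℚ) := by
    ext v w
    simp only [degMatrix]
    congr! 3 with u
    convert h.degree_eq u
  rw [signlessLapMatrix, hdeg, sub_add_cancel_left]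

theorem qPermAtTwo_eq_of_isRegularOfDegree_two {G : SimpleGraph V} [G.LocallyFinite]
    (h : G.IsRegularOfDegree 2) :
    qPermAtTwo G = (-1) ^ Fintype.card V * Nat.card {σ : Perm V // ∀ v, G.Adj (σ v) v} := by
  have := diagonal_sub_signlessLapMatrix h
  rw [Nat.cast_ofNat] at this
  rw [qPermAtTwo, this, ← neg_one_smul ℚ, Matrix.permanent_smul, permanent_adjMatrix]

open Fin.CommRing in
theorem forall_cycleGraph_adj_perm_apply_iff {n : ℕ} {σ : Perm (Fin (n + 2))} :
    (∀ v, (cycleGraph (n + 2)).Adj (σ v) v) ↔ σ.IsUnitStep :=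
  forall_congr' fun v => by
    rw [cycleGraph_adj, ← neg_sub (σ v) v, neg_eq_iff_eq_neg]
    rfl

end SimpleGraph

/-- **Lemma 2.10(d).** For `n ≥ 3`, the signless Laplacian permanental polynomial of the
cycle `Cₙ` evaluated at `x = 2` equals `3·(−1)ⁿ + 1`. -/
theorem qPermAtTwo_cycleGraph (n : ℕ) (hn : 3 ≤ n) :
    qPermAtTwo (SimpleGraph.cycleGraph n) = 3 * (-1 : ℚ) ^ n + 1 := by
  obtain ⟨m, rfl⟩ : ∃ m, n = m + 3 := ⟨n - 3, by omega⟩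
  have h2 : (2 : Fin (m + 3)) ≠ 0 := by simp [Fin.ext_iff, Nat.mod_eq_of_lt]
  rw [SimpleGraph.qPermAtTwo_eq_of_isRegularOfDegree_two
    fun _ => SimpleGraph.cycleGraph_degree_three_le]
  simp_rw [SimpleGraph.forall_cycleGraph_adj_perm_apply_iff]
  rw [Fintype.card_fin, Perm.nat_card_isUnitStep h2]
  split_ifs with he
  · rw [he.neg_one_pow]; norm_num
  · rw [(Nat.not_even_iff_odd.mp he).neg_one_pow]; norm_num
end
end

section
/- Let G be a nearly regular simple graph on n vertices, i.e., a graph in which the degrees of any two vertices differ by at most 1. If H is a simple graph with per(xI − L(H)) = per(xI − L(G)) as polynomials in x (or with per(xI − Q(H)) = per(xI − Q(G)) as polynomials in x), then H has the same degree sequence as G (the multisets of vertex degrees of G and H coincide). -/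
/-
Expanding `per(x·I − M)` over permutations, a permutation moving `m` points contributes a
polynomial of degree `n − m`. Hence the top coefficients only see the identity and the
transpositions: the polynomial is monic of degree `n`, its `xⁿ⁻¹`-coefficient is `−tr M`, and twice
its `xⁿ⁻²`-coefficient is `(tr M)² − ∑ Mᵢᵢ² + ∑_{i ≠ j} Mᵢⱼ Mⱼᵢ`. For `M = L(G)` or `Q(G)` the
diagonal is the degree sequence and `Mᵢⱼ Mⱼᵢ` is the adjacency matrix, so copermanental graphs
have the same number of vertices, the same `∑ dᵢ` and the same `∑ dᵢ²`. If the degrees of `G`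
are all `k` or `k + 1`, then `∑ (dᵢ − k)(dᵢ − k − 1)` vanishes for `G`, hence for `H`; its terms
are nonnegative integers, so the degrees of `H` are also `k` or `k + 1`, and two such degree
sequences with the same length and sum coincide.
-/
open scoped Classical
open Polynomial

noncomputable section

open Finset Equiv

namespace Multiset

variable {R : Type*} [CommRing R]

theorem esymm_cons_succ (a : R) (s : Multiset R) (k : ℕ) :
    (a ::ₘ s).esymm (k + 1) = s.esymm (k + 1) + a * s.esymm k := by
  simp [esymm, powersetCard_cons, sum_map_mul_left]

theorem esymm_one (s : Multiset R) : s.esymm 1 = s.sum := by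
  simp [esymm, powersetCard_one]

theorem two_mul_esymm_two (s : Multiset R) :
    2 * s.esymm 2 = s.sum ^ 2 - (s.map (· ^ 2)).sum := by
  induction s using Multiset.induction_on with
  | empty => simp [esymm, powersetCard_zero_right]
  | cons a s ih =>
    rw [esymm_cons_succ, esymm_one]
    simp only [sum_cons, map_cons]
    linear_combination ih

theorem eq_replicate_count_add_replicate_count {α : Type*} [DecidableEq α] {a b : α}
    {s : Multiset α} (hab : a ≠ b) (hs : ∀ x ∈ s, x = a ∨ x = b) :
    s = replicate (count a s) a + replicate (count b s) b := by
  rw [← filter_eq', ← filter_eq']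
  conv_lhs => rw [← filter_add_not (· = a) s]
  congr 1
  refine filter_congr fun x hx => ?_
  rcases hs x hx with rfl | rfl <;> simp [hab, Ne.symm hab]

theorem eq_of_card_eq_of_sum_eq {k : ℕ} {s t : Multiset ℕ}
    (hs : ∀ x ∈ s, x = k ∨ x = k + 1) (ht : ∀ x ∈ t, x = k ∨ x = k + 1)
    (hcard : card s = card t) (hsum : s.sum = t.sum) : s = t := by
  have hk : k ≠ k + 1 := by omega
  rw [eq_replicate_count_add_replicate_count hk hs,
    eq_replicate_count_add_replicate_count hk ht] at hcard hsum ⊢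
  simp only [card_add, card_replicate, sum_add, sum_replicate, smul_eq_mul] at hcard hsum
  have h1 : count (k + 1) s = count (k + 1) t := by
    have := congrArg (· * k) hcard
    simp only [add_mul] at this
    linarith
  rw [h1, show count k s = count k t by omega]

end Multiset

theorem Finset.sum_sub_mul_sub_sub_one {ι R : Type*} [CommRing R] (s : Finset ι) (f : ι → R)
    (k : R) : ∑ i ∈ s, (f i - k) * (f i - k - 1) =
      ∑ i ∈ s, f i ^ 2 - (2 * k + 1) * ∑ i ∈ s, f i + #s * (k * (k + 1)) := by
  calc ∑ i ∈ s, (f i - k) * (f i - k - 1)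
      = ∑ i ∈ s, (f i ^ 2 - (2 * k + 1) * f i + k * (k + 1)) := sum_congr rfl fun i _ => by ring
    _ = _ := by rw [sum_add_distrib, sum_sub_distrib, ← mul_sum, sum_const, nsmul_eq_mul]

namespace Equiv.Perm

variable {α : Type*} [DecidableEq α] [Fintype α]

theorem eq_swap_apply_of_card_support_eq_two {σ : Perm α} {i : α} (hσ : #σ.support = 2)
    (hi : i ∈ σ.support) : σ = swap i (σ i) := by
  obtain ⟨x, y, hxy, rfl⟩ := card_support_eq_two.mp hσ
  rw [support_swap hxy, mem_insert, mem_singleton] at hi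
  rcases hi with rfl | rfl
  · rw [swap_apply_left]
  · rw [swap_apply_right, swap_comm]

theorem two_mul_sum_prod_support_of_card_support_eq_two {R : Type*} [CommRing R]
    (f : α → α → R) :
    2 * ∑ σ : Perm α with #σ.support = 2, ∏ i ∈ σ.support, f (σ i) i =
      ∑ p ∈ univ.offDiag, f p.1 p.2 * f p.2 p.1 := by
  have hprod : ∀ σ : Perm α, #σ.support = 2 → ∀ i ∈ σ.support,
      ∏ j ∈ σ.support, f (σ j) j = f i (σ i) * f (σ i) i := by
    intro σ hσ i hi
    obtain ⟨y, hy⟩ : ∃ y, σ i = y := ⟨_, rfl⟩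
    have hiy : i ≠ y := fun h => mem_support.mp hi (hy.trans h.symm)
    rw [hy, eq_swap_apply_of_card_support_eq_two hσ hi, hy, support_swap hiy, prod_pair hiy,
      swap_apply_left, swap_apply_right, mul_comm]
  calc 2 * ∑ σ : Perm α with #σ.support = 2, ∏ i ∈ σ.support, f (σ i) i
      = ∑ σ : Perm α with #σ.support = 2, ∑ i ∈ σ.support, f i (σ i) * f (σ i) i := by
        rw [mul_sum]
        refine sum_congr rfl fun σ hσ => ?_
        rw [mem_filter] at hσ
        rw [← sum_congr rfl (hprod σ hσ.2), sum_const, hσ.2, two_smul, two_mul]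
    _ = ∑ p ∈ univ.offDiag, f p.1 p.2 * f p.2 p.1 := by
        rw [sum_sigma']
        refine sum_nbij' (fun x => (x.2, x.1 x.2)) (fun p => ⟨swap p.1 p.2, p.1⟩) ?_ ?_ ?_ ?_ ?_
        · rintro ⟨σ, i⟩ h
          simp only [mem_sigma, mem_filter, mem_univ, true_and] at h
          simpa [eq_comm] using mem_support.mp h.2
        · rintro ⟨a, b⟩ h
          have hab : a ≠ b := (mem_offDiag.mp h).2.2
          exact mem_sigma.mpr ⟨mem_filter.mpr ⟨mem_univ _, card_support_swap hab⟩,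
            by simp [support_swap hab]⟩
        · rintro ⟨σ, i⟩ h
          simp only [mem_sigma, mem_filter, mem_univ, true_and] at h
          simp only [← eq_swap_apply_of_card_support_eq_two h.1 h.2]
        · rintro ⟨a, b⟩ h
          simp
        · rintro ⟨σ, i⟩ h
          rfl

end Equiv.Perm

namespace Polynomial

theorem two_mul_prod_X_sub_C_coeff_card_sub_two {ι R : Type*} [CommRing R] (s : Finset ι)
    (f : ι → R) (hs : 2 ≤ #s) :
    2 * (∏ i ∈ s, (X - C (f i))).coeff (#s - 2) = (∑ i ∈ s, f i) ^ 2 - ∑ i ∈ s, f i ^ 2 := by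
  have hprod : ∏ i ∈ s, (X - C (f i)) = ((s.val.map f).map (X - C ·)).prod := by
    rw [Multiset.map_map]; rfl
  rw [hprod, Multiset.prod_X_sub_C_coeff _ (by simp), Multiset.card_map, card_val,
    Nat.sub_sub_self hs, neg_one_sq, one_mul, Multiset.two_mul_esymm_two, Multiset.map_map]
  rfl

end Polynomial

namespace Matrix

variable {n R : Type*} [Fintype n] [CommRing R]

def permCharpoly (M : Matrix n n R) : R[X] :=
  (diagonal (fun _ : n => (X : R[X])) - M.map C).permanent

theorem permCharpoly_eq_sum (M : Matrix n n R) :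
    M.permCharpoly = ∑ σ : Perm n,
      C (∏ i ∈ σ.support, -M (σ i) i) * ∏ i ∈ σ.supportᶜ, (X - C (M i i)) := by
  refine sum_congr rfl fun σ _ => ?_
  rw [← prod_mul_prod_compl σ.support, map_prod]
  congr 1 <;> refine prod_congr rfl fun i hi => ?_
  · have h : σ i ≠ i := Perm.mem_support.mp hi
    simp [diagonal_apply_ne _ h]
  · have h : σ i = i := by simpa using hi
    simp [h]

theorem coeff_prod_compl_support_eq_zero (M : Matrix n n R) {σ : Perm n} {k : ℕ}
    (hk : Fintype.card n < k + #σ.support) :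
    (∏ i ∈ σ.supportᶜ, (X - C (M i i))).coeff k = 0 := by
  nontriviality R
  apply coeff_eq_zero_of_natDegree_lt
  rw [natDegree_finsetProd_X_sub_C_eq_card, card_compl]
  have := card_le_univ σ.support
  omega

theorem coeff_permCharpoly_of_card_le_succ (M : Matrix n n R) {k : ℕ}
    (hk : Fintype.card n ≤ k + 1) :
    M.permCharpoly.coeff k = (∏ i, (X - C (M i i))).coeff k := by
  rw [permCharpoly_eq_sum, finsetSum_coeff, sum_eq_single_of_mem 1 (mem_univ _)]
  · simp
  · intro σ _ hσ
    rw [coeff_C_mul, coeff_prod_compl_support_eq_zero M, mul_zero]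
    have := Perm.one_lt_card_support_of_ne_one hσ
    omega

theorem natDegree_permCharpoly [Nontrivial R] (M : Matrix n n R) :
    M.permCharpoly.natDegree = Fintype.card n := by
  have hprod := monic_prod_X_sub_C (fun i => M i i) univ
  have hdeg : (∏ i, (X - C (M i i))).natDegree = Fintype.card n :=
    natDegree_finsetProd_X_sub_C_eq_card _ _
  refine natDegree_eq_of_le_of_coeff_ne_zero ?_ ?_
  · rw [natDegree_le_iff_coeff_eq_zero]
    intro k hk
    rw [coeff_permCharpoly_of_card_le_succ M (by omega)]
    exact coeff_eq_zero_of_natDegree_lt (by rw [hdeg]; exact_mod_cast hk)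
  · rw [coeff_permCharpoly_of_card_le_succ M (by omega), ← hdeg, hprod.coeff_natDegree]
    exact one_ne_zero

theorem coeff_permCharpoly_card_sub_one (M : Matrix n n R) (hn : 0 < Fintype.card n) :
    M.permCharpoly.coeff (Fintype.card n - 1) = -M.trace := by
  rw [coeff_permCharpoly_of_card_le_succ M (by omega), ← card_univ,
    prod_X_sub_C_coeff_card_pred _ _ (by rwa [card_univ]), trace]
  rfl

theorem two_mul_coeff_permCharpoly_card_sub_two (M : Matrix n n R) (hn : 2 ≤ Fintype.card n) :
    2 * M.permCharpoly.coeff (Fintype.card n - 2) =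
      M.trace ^ 2 - ∑ i, M i i ^ 2 + ∑ p ∈ univ.offDiag, M p.1 p.2 * M p.2 p.1 := by
  nontriviality R
  set S := univ.filter fun σ : Perm n => #σ.support = 2
  have h1S : (1 : Perm n) ∉ S := by
    simp only [S, mem_filter, Perm.support_one, card_empty]; omega
  rw [permCharpoly_eq_sum, finsetSum_coeff, ← sum_subset (subset_univ (insert 1 S)),
    sum_insert h1S, mul_add]
  · congr 1
    · rw [← card_univ] at hn ⊢
      simpa [trace] using two_mul_prod_X_sub_C_coeff_card_sub_two univ (fun i => M i i) hn
    · rw [← Perm.two_mul_sum_prod_support_of_card_support_eq_two (fun i j => M i j)]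
      refine congrArg _ (sum_congr rfl fun σ hσ => ?_)
      have hσ2 : #σ.support = 2 := (mem_filter.mp hσ).2
      have hcompl : #σ.supportᶜ = Fintype.card n - 2 := by rw [card_compl, hσ2]
      rw [coeff_C_mul, ← hcompl, ← natDegree_finsetProd_X_sub_C_eq_card _ fun i => M i i,
        (monic_prod_X_sub_C _ _).coeff_natDegree, mul_one, prod_neg, hσ2, neg_one_sq, one_mul]
  · intro σ _ hσ
    simp only [S, mem_insert, mem_filter, mem_univ, true_and, not_or] at hσ
    rw [coeff_C_mul, coeff_prod_compl_support_eq_zero M, mul_zero]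
    have := Perm.one_lt_card_support_of_ne_one hσ.1
    have := hσ.2
    omega

end Matrix

namespace SimpleGraph

variable {V R : Type*} [Fintype V]

structure IsLaplacianLike [CommRing R] (G : SimpleGraph V) (M : Matrix V V R) : Prop where
  apply_self : ∀ i, M i i = G.degree i
  apply_mul_apply : ∀ i j, i ≠ j → M i j * M j i = G.adjMatrix R i j

theorem isLaplacianLike_lapMatrix [CommRing R] (G : SimpleGraph V) :
    G.IsLaplacianLike (G.lapMatrix R) where
  apply_self i := by simp [lapMatrix, degMatrix]
  apply_mul_apply i j hij := by
    by_cases hadj : G.Adj i j <;>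
      simp [lapMatrix, degMatrix, hij, hij.symm, hadj, G.adj_comm j i]

theorem isLaplacianLike_signlessLapMatrix (G : SimpleGraph V) :
    G.IsLaplacianLike (signlessLapMatrix G) where
  apply_self i := by simp [signlessLapMatrix, degMatrix]
  apply_mul_apply i j hij := by
    by_cases hadj : G.Adj i j <;>
      simp [signlessLapMatrix, degMatrix, hij, hij.symm, hadj, G.adj_comm j i]

namespace IsLaplacianLike

variable [CommRing R] {G : SimpleGraph V} {M : Matrix V V R}

theorem trace_eq (hM : G.IsLaplacianLike M) : M.trace = ∑ v, (G.degree v : R) :=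
  sum_congr rfl fun v _ => hM.apply_self v

theorem sum_offDiag_apply_mul_apply (hM : G.IsLaplacianLike M) :
    ∑ p ∈ univ.offDiag, M p.1 p.2 * M p.2 p.1 = ∑ v, (G.degree v : R) := by
  rw [sum_congr rfl fun p hp => hM.apply_mul_apply _ _ (mem_offDiag.mp hp).2.2,
    sum_subset (subset_univ _) fun p _ hp => ?_, Fintype.sum_prod_type]
  · refine sum_congr rfl fun v _ => ?_
    simp [← card_neighborFinset_eq_degree, neighborFinset_eq_filter]
  · have : p.1 = p.2 := by simpa using hp
    simp [this]

theorem two_mul_coeff_permCharpoly_card_sub_two (hM : G.IsLaplacianLike M)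
    (hn : 2 ≤ Fintype.card V) :
    2 * M.permCharpoly.coeff (Fintype.card V - 2) =
      (∑ v, (G.degree v : R)) ^ 2 - ∑ v, (G.degree v : R) ^ 2 + ∑ v, (G.degree v : R) := by
  rw [M.two_mul_coeff_permCharpoly_card_sub_two hn, hM.trace_eq, hM.sum_offDiag_apply_mul_apply]
  simp only [hM.apply_self]

theorem degree_sums_eq_of_permCharpoly_eq [CharZero R] {W : Type*} [Fintype W]
    {H : SimpleGraph W} {N : Matrix W W R} (hN : H.IsLaplacianLike N) (hM : G.IsLaplacianLike M)
    (h : N.permCharpoly = M.permCharpoly) :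
    Fintype.card W = Fintype.card V ∧ ∑ w, H.degree w = ∑ v, G.degree v ∧
      ∑ w, H.degree w ^ 2 = ∑ v, G.degree v ^ 2 := by
  have hcard : Fintype.card W = Fintype.card V := by
    rw [← N.natDegree_permCharpoly, h, M.natDegree_permCharpoly]
  refine ⟨hcard, ?_⟩
  rcases lt_or_ge (Fintype.card V) 2 with hsmall | hn
  · have hG (v : V) : G.degree v = 0 := by have := G.degree_lt_card_verts v; omega
    have hH (w : W) : H.degree w = 0 := by have := H.degree_lt_card_verts w; omega
    simp [hG, hH]
  have hsum : ∑ w, (H.degree w : R) = ∑ v, (G.degree v : R) := by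
    have := N.coeff_permCharpoly_card_sub_one (by omega)
    rw [h, hcard, M.coeff_permCharpoly_card_sub_one (by omega), hN.trace_eq, hM.trace_eq] at this
    exact (neg_injective this).symm
  have hsq : ∑ w, (H.degree w : R) ^ 2 = ∑ v, (G.degree v : R) ^ 2 := by
    have := hN.two_mul_coeff_permCharpoly_card_sub_two (by omega)
    rw [h, hcard, hM.two_mul_coeff_permCharpoly_card_sub_two hn, hsum] at this
    linear_combination this
  exact ⟨by exact_mod_cast hsum, by exact_mod_cast hsq⟩

end IsLaplacianLike

end SimpleGraph

theorem exists_forall_eq_or_eq_add_one_of_abs_sub_le_one {ι : Type*} [Finite ι] {f : ι → ℕ}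
    (hf : ∀ i j, |(f i : ℤ) - f j| ≤ 1) : ∃ k, ∀ i, f i = k ∨ f i = k + 1 := by
  cases isEmpty_or_nonempty ι
  · exact ⟨0, isEmptyElim⟩
  obtain ⟨i₀, hi₀⟩ := Finite.exists_min f
  refine ⟨f i₀, fun i => ?_⟩
  have := abs_le.mp (hf i i₀)
  have := hi₀ i
  omega

theorem map_univ_val_eq_of_sum_eq_of_sum_sq_eq {ι κ : Type*} [Fintype ι] [Fintype κ]
    {f : ι → ℕ} {g : κ → ℕ} {k : ℕ} (hf : ∀ i, f i = k ∨ f i = k + 1)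
    (hcard : Fintype.card κ = Fintype.card ι) (hsum : ∑ j, g j = ∑ i, f i)
    (hsq : ∑ j, g j ^ 2 = ∑ i, f i ^ 2) : univ.val.map g = univ.val.map f := by
  have hg : ∀ j, g j = k ∨ g j = k + 1 := by
    have hzero : ∑ j, ((g j : ℤ) - k) * ((g j : ℤ) - k - 1) = 0 := by
      have hsumZ : ∑ j, (g j : ℤ) = ∑ i, (f i : ℤ) := by exact_mod_cast hsum
      have hsqZ : ∑ j, (g j : ℤ) ^ 2 = ∑ i, (f i : ℤ) ^ 2 := by exact_mod_cast hsq
      calc ∑ j, ((g j : ℤ) - k) * ((g j : ℤ) - k - 1)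
          = ∑ i, ((f i : ℤ) - k) * ((f i : ℤ) - k - 1) := by
            rw [sum_sub_mul_sub_sub_one, sum_sub_mul_sub_sub_one, hsumZ, hsqZ, card_univ,
              card_univ, hcard]
        _ = 0 := sum_eq_zero fun i _ => by rcases hf i with h | h <;> rw [h] <;> push_cast <;> ring
    have hnonneg (x : ℤ) : 0 ≤ (x - k) * (x - k - 1) := by
      rcases le_or_gt x k with h | h <;> nlinarith
    intro j
    rcases mul_eq_zero.mp ((sum_eq_zero_iff_of_nonneg fun j _ => hnonneg _).mp hzero j
      (mem_univ j)) with h | h <;> omega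
  refine Multiset.eq_of_card_eq_of_sum_eq (by simpa using hg) (by simpa using hf) ?_ hsum
  simpa using hcard

/-- **Lemma 2.13.** If `G` is nearly regular (the degrees of any two vertices differ by at
most `1`) and `H` has the same Laplacian permanental polynomial as `G`, or the same
signless Laplacian permanental polynomial as `G`, then `H` has the same degree sequence
as `G` (the multisets of vertex degrees coincide). -/
theorem nearlyRegular_copermanental_degree_sequence
    {V W : Type*} [Fintype V] [Fintype W] (G : SimpleGraph V) (H : SimpleGraph W)
    (hreg : ∀ u v : V, |(G.degree u : ℤ) - (G.degree v : ℤ)| ≤ 1)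
    (h : lapPermPoly H = lapPermPoly G ∨ qPermPoly H = qPermPoly G) :
    Finset.univ.val.map (fun w => H.degree w) =
      Finset.univ.val.map (fun v => G.degree v) := by
  obtain ⟨k, hk⟩ := exists_forall_eq_or_eq_add_one_of_abs_sub_le_one hreg
  obtain ⟨hcard, hsum, hsq⟩ : Fintype.card W = Fintype.card V ∧
      ∑ w, H.degree w = ∑ v, G.degree v ∧ ∑ w, H.degree w ^ 2 = ∑ v, G.degree v ^ 2 := by
    rcases h with hL | hQ
    · exact (H.isLaplacianLike_lapMatrix (R := ℚ)).degree_sums_eq_of_permCharpoly_eq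
        G.isLaplacianLike_lapMatrix hL
    · exact H.isLaplacianLike_signlessLapMatrix.degree_sums_eq_of_permCharpoly_eq
        G.isLaplacianLike_signlessLapMatrix hQ
  exact map_univ_val_eq_of_sum_eq_of_sum_sq_eq hk hcard hsum hsq
end
end
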